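/- arXiv:1608.06010 — 3 statements merged into one kernel-verified Lean document; each statement's English description precedes it below -/
import Mathlib

section
/- If a* is a column of D with |a*ᵀy| = λ_max and λ₁ < λ_max, then the dual solution θ₁* lies in the half space {θ : sᵀθ ≤ 1} where s = sgn(a*ᵀy)·a*, and also lies in the ball centered at y/λ₁ of radius ‖y/λ₁ − y/λ_max‖₂; hence θ₁* is contained in the dome formed by their intersection. -/
/-! The half-space bound holds because `θ₁*` is dual feasible, so `|a*ᵀθ₁*| ≤ 1`. The ball bound
holds because `y/λ_max` is dual feasible (`λ_max` dominates every `|aᵢᵀy|`), and the projection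
`θ₁*` is at least as close to `y/λ₁` as any feasible point. -/

open RealInnerProductSpace

lemma Real.abs_sign_le_one (c : ℝ) : |Real.sign c| ≤ 1 := by
  rcases Real.sign_apply_eq c with h | h | h <;> simp [h]

section

variable {E : Type*} [NormedAddCommGroup E] [InnerProductSpace ℝ E]

lemma inner_sign_smul_le_one {a θ : E} (c : ℝ) (h : |⟪a, θ⟫| ≤ 1) :
    ⟪Real.sign c • a, θ⟫ ≤ 1 := by
  rw [real_inner_smul_left]
  calc Real.sign c * ⟪a, θ⟫ ≤ |Real.sign c| * |⟪a, θ⟫| := (le_abs_self _).trans (abs_mul _ _).le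
    _ ≤ 1 * 1 := mul_le_mul (Real.abs_sign_le_one c) h (abs_nonneg _) zero_le_one
    _ = 1 := one_mul 1

lemma abs_inner_inv_smul_le_one {a y : E} {c : ℝ} (hc : 0 ≤ c) (h : |⟪a, y⟫| ≤ c) :
    |⟪a, c⁻¹ • y⟫| ≤ 1 := by
  rw [real_inner_smul_right, abs_mul, abs_of_nonneg (inv_nonneg.2 hc)]
  exact inv_mul_le_one_of_le₀ h hc

end

theorem stmt_7_general (d p : ℕ) (hp : 0 < p) (a : Fin p → EuclideanSpace ℝ (Fin d))
    (y : EuclideanSpace ℝ (Fin d)) (lam1 lamMax : ℝ)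
    (hlamMax : lamMax = (Finset.univ.sup' (Finset.univ_nonempty_iff.mpr
      (Fin.pos_iff_nonempty.mp hp)) fun i => |⟪a i, y⟫|))
    (hmaxpos : 0 < lamMax)
    (j : Fin p)
    (s : EuclideanSpace ℝ (Fin d)) (hs : s = Real.sign ⟪a j, y⟫ • a j)
    (F : Set (EuclideanSpace ℝ (Fin d)))
    (hF : F = {θ | ∀ i, |⟪a i, θ⟫| ≤ 1})
    (θ1 : EuclideanSpace ℝ (Fin d)) (hθ1 : θ1 ∈ F)
    (hproj : ∀ θ ∈ F, ‖θ1 - lam1⁻¹ • y‖ ≤ ‖θ - lam1⁻¹ • y‖) :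
    ⟪s, θ1⟫ ≤ 1 ∧ ‖θ1 - lam1⁻¹ • y‖ ≤ ‖lam1⁻¹ • y - lamMax⁻¹ • y‖ := by
  subst hF hs
  have hfeasible : lamMax⁻¹ • y ∈ {θ | ∀ i, |⟪a i, θ⟫| ≤ 1} := fun i =>
    abs_inner_inv_smul_le_one hmaxpos.le
      (hlamMax ▸ Finset.le_sup' (fun k => |⟪a k, y⟫|) (Finset.mem_univ i))
  refine ⟨inner_sign_smul_le_one _ (hθ1 j), ?_⟩
  rw [norm_sub_rev (lam1⁻¹ • y)]
  exact hproj _ hfeasible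

theorem stmt_7 (d p : ℕ) (hp : 0 < p) (a : Fin p → EuclideanSpace ℝ (Fin d))
    (y : EuclideanSpace ℝ (Fin d)) (lam1 lamMax : ℝ)
    (hlamMax : lamMax = (Finset.univ.sup' (Finset.univ_nonempty_iff.mpr
      (Fin.pos_iff_nonempty.mp hp)) fun i => |⟪a i, y⟫|))
    (hmaxpos : 0 < lamMax)
    (hlam1 : 0 < lam1) (hlt : lam1 < lamMax)
    (j : Fin p) (hj : |⟪a j, y⟫| = lamMax)
    (s : EuclideanSpace ℝ (Fin d)) (hs : s = Real.sign ⟪a j, y⟫ • a j)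
    (F : Set (EuclideanSpace ℝ (Fin d)))
    (hF : F = {θ | ∀ i, |⟪a i, θ⟫| ≤ 1})
    (θ1 : EuclideanSpace ℝ (Fin d)) (hθ1 : θ1 ∈ F)
    (hproj : ∀ θ ∈ F, ‖θ1 - lam1⁻¹ • y‖ ≤ ‖θ - lam1⁻¹ • y‖) :
    ⟪s, θ1⟫ ≤ 1 ∧ ‖θ1 - lam1⁻¹ • y‖ ≤ ‖lam1⁻¹ • y - lamMax⁻¹ • y‖ :=
  stmt_7_general d p hp a y lam1 lamMax hlamMax hmaxpos j s hs F hF θ1 hθ1 hproj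
end

section
/- Let y ∈ ℝ^d nonzero, λ > 0, and let θ ∈ ℝ^d be not parallel to y with ‖θ‖₂ ≤ C. Define n = (y/λ − θ)/‖y/λ − θ‖₂ (assumed well defined). Then λ·(yᵀ(I − nnᵀ)y)^{−1/2} ≥ 1/‖θ‖₂ ≥ 1/C. Equivalently, yᵀ(I − nnᵀ)y ≤ λ²·‖θ‖₂² — more precisely, yᵀ(I−nnᵀ)y = λ²(‖y‖₂²‖θ‖₂² − (yᵀθ)²)/‖y − λθ‖₂² and ‖y − λθ‖₂² ≥ (‖y‖₂²‖θ‖₂² − (yᵀθ)²)/‖θ‖₂². -/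
/-!
Everything is expressed through the Gram determinant `G(x, v) = ‖x‖²‖v‖² - ⟪x, v⟫²`, which is
symmetric, unchanged when a multiple of one argument is added to the other, and positive for
non-parallel vectors (strict Cauchy–Schwarz). For the unit vector `n` along `w = y/λ - θ`,
`‖y‖² - ⟪n, y⟫² = G(w, y) / ‖w‖² = G(y, θ) / ‖w‖²`, and `‖y - λθ‖ = λ‖w‖`, which gives the
identity. The lower bound on `‖y - λθ‖²` is Cauchy–Schwarz for `G(y, θ) = G(y - λθ, θ)`,
and combining the two gives `‖y‖² - ⟪n, y⟫² ≤ λ²‖θ‖²`.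
-/

open RealInnerProductSpace

section GramDet

variable {F : Type*} [NormedAddCommGroup F] [InnerProductSpace ℝ F]

def gramDet (x v : F) : ℝ := ‖x‖ ^ 2 * ‖v‖ ^ 2 - ⟪x, v⟫ ^ 2

theorem gramDet_comm (x v : F) : gramDet x v = gramDet v x := by
  rw [gramDet, gramDet, real_inner_comm, mul_comm]

theorem gramDet_neg_left (x v : F) : gramDet (-x) v = gramDet x v := by
  rw [gramDet, gramDet, norm_neg, inner_neg_left, neg_sq]

theorem gramDet_add_smul_left (x v : F) (t : ℝ) : gramDet (x + t • v) v = gramDet x v := by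
  simp only [gramDet, norm_add_sq_real, inner_add_left, real_inner_smul_left, real_inner_smul_right,
    norm_smul, real_inner_self_eq_norm_sq, Real.norm_eq_abs, mul_pow, sq_abs]
  ring

theorem gramDet_sub_smul_left (x v : F) (t : ℝ) : gramDet (x - t • v) v = gramDet x v := by
  rw [sub_eq_add_neg, ← neg_smul, gramDet_add_smul_left]

theorem gramDet_pos {x v : F} (hx : x ≠ 0) (hv : ∀ t : ℝ, v ≠ t • x) : 0 < gramDet x v := by
  have hv₀ : v ≠ 0 := by simpa using hv 0
  have hlt : |⟪x, v⟫| < ‖x‖ * ‖v‖ := by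
    refine (abs_real_inner_le_norm x v).lt_of_ne fun h => ?_
    obtain ⟨r, -, hr⟩ := (norm_inner_eq_norm_iff (𝕜 := ℝ) hx hv₀).1 h
    exact hv r hr
  rw [gramDet, ← mul_pow, sub_pos]
  exact sq_lt_sq' (abs_lt.1 hlt).1 (abs_lt.1 hlt).2

theorem gramDet_le_norm_sub_smul_sq_mul (x v : F) (t : ℝ) :
    gramDet x v ≤ ‖x - t • v‖ ^ 2 * ‖v‖ ^ 2 := by
  rw [← gramDet_sub_smul_left x v t, gramDet]
  exact sub_le_self _ (sq_nonneg _)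

theorem norm_sq_sub_inner_normalize_sq {w : F} (hw : w ≠ 0) (y : F) :
    ‖y‖ ^ 2 - ⟪‖w‖⁻¹ • w, y⟫ ^ 2 = gramDet w y / ‖w‖ ^ 2 := by
  have : ‖w‖ ≠ 0 := norm_ne_zero_iff.2 hw
  rw [gramDet, real_inner_smul_left]
  field_simp

end GramDet

theorem one_div_le_mul_inv_sqrt {a b s : ℝ} (hs : 0 < s) (hb : 0 < b) (ha : 0 ≤ a)
    (h : s ≤ (a * b) ^ 2) : 1 / b ≤ a * (√s)⁻¹ := by
  rw [← div_eq_mul_inv, le_div_iff₀ (Real.sqrt_pos.2 hs), one_div_mul_eq_div, div_le_iff₀ hb]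
  exact Real.sqrt_le_iff.2 ⟨by positivity, h⟩

theorem stmt_13_general (d : ℕ) (y θ : EuclideanSpace ℝ (Fin d)) (lam C : ℝ)
    (hy : y ≠ 0) (hlam : 0 < lam)
    (hpar : ∀ t : ℝ, θ ≠ t • y) (hθC : ‖θ‖ ≤ C)
    (n : EuclideanSpace ℝ (Fin d))
    (hn : n = ‖lam⁻¹ • y - θ‖⁻¹ • (lam⁻¹ • y - θ)) :
    1 / ‖θ‖ ≤ lam * (Real.sqrt (‖y‖ ^ 2 - ⟪n, y⟫ ^ 2))⁻¹ ∧
    1 / C ≤ 1 / ‖θ‖ ∧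
    ‖y‖ ^ 2 - ⟪n, y⟫ ^ 2 =
      lam ^ 2 * (‖y‖ ^ 2 * ‖θ‖ ^ 2 - ⟪y, θ⟫ ^ 2) / ‖y - lam • θ‖ ^ 2 ∧
    (‖y‖ ^ 2 * ‖θ‖ ^ 2 - ⟪y, θ⟫ ^ 2) / ‖θ‖ ^ 2 ≤ ‖y - lam • θ‖ ^ 2 := by
  set w := lam⁻¹ • y - θ with hw_def
  have hθ : 0 < ‖θ‖ := norm_pos_iff.2 (by simpa using hpar 0)
  have hw : w ≠ 0 := sub_ne_zero.2 (hpar lam⁻¹).symm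
  have hG : 0 < gramDet y θ := gramDet_pos hy hpar
  have hG_le : gramDet y θ ≤ ‖y - lam • θ‖ ^ 2 * ‖θ‖ ^ 2 :=
    gramDet_le_norm_sub_smul_sq_mul y θ lam
  have hdist : ‖y - lam • θ‖ ^ 2 = lam ^ 2 * ‖w‖ ^ 2 := by
    rw [← mul_pow, ← norm_smul_of_nonneg hlam.le, hw_def, smul_sub, smul_inv_smul₀ hlam.ne']
  have hS : ‖y‖ ^ 2 - ⟪n, y⟫ ^ 2 = gramDet y θ / ‖w‖ ^ 2 := by
    rw [hn, norm_sq_sub_inner_normalize_sq hw, hw_def, sub_eq_neg_add, gramDet_add_smul_left,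
      gramDet_neg_left, gramDet_comm]
  have hident : ‖y‖ ^ 2 - ⟪n, y⟫ ^ 2 = lam ^ 2 * gramDet y θ / ‖y - lam • θ‖ ^ 2 := by
    rw [hS, hdist, mul_div_mul_left _ _ (by positivity)]
  refine ⟨one_div_le_mul_inv_sqrt ?_ hθ hlam.le ?_, one_div_le_one_div_of_le hθ hθC, hident,
    div_le_of_le_mul₀ (by positivity) (by positivity) hG_le⟩
  · rw [hS]
    exact div_pos hG (by positivity)
  · rw [hS, div_le_iff₀ (by positivity)]
    calc gramDet y θ ≤ ‖y - lam • θ‖ ^ 2 * ‖θ‖ ^ 2 := hG_le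
      _ = (lam * ‖θ‖) ^ 2 * ‖w‖ ^ 2 := by rw [hdist]; ring

theorem stmt_13 (d : ℕ) (y θ : EuclideanSpace ℝ (Fin d)) (lam C : ℝ)
    (hy : y ≠ 0) (hlam : 0 < lam) (hC : 0 < C)
    (hpar : ∀ t : ℝ, θ ≠ t • y) (hθC : ‖θ‖ ≤ C)
    (hne : lam⁻¹ • y - θ ≠ 0)
    (n : EuclideanSpace ℝ (Fin d))
    (hn : n = ‖lam⁻¹ • y - θ‖⁻¹ • (lam⁻¹ • y - θ)) :
    1 / ‖θ‖ ≤ lam * (Real.sqrt (‖y‖ ^ 2 - ⟪n, y⟫ ^ 2))⁻¹ ∧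
    1 / C ≤ 1 / ‖θ‖ ∧
    ‖y‖ ^ 2 - ⟪n, y⟫ ^ 2 =
      lam ^ 2 * (‖y‖ ^ 2 * ‖θ‖ ^ 2 - ⟪y, θ⟫ ^ 2) / ‖y - lam • θ‖ ^ 2 ∧
    (‖y‖ ^ 2 * ‖θ‖ ^ 2 - ⟪y, θ⟫ ^ 2) / ‖θ‖ ^ 2 ≤ ‖y - lam • θ‖ ^ 2 :=
  stmt_13_general d y θ lam C hy hlam hpar hθC n hn
end

section
/- If y is in the range of D ∈ ℝ^{d×p}, then the lasso dual regularization path is bounded: there exists C > 0 such that for all λ > 0, the dual solution θ*(λ) = (y − Dw*(λ))/λ satisfies ‖θ*(λ)‖₂ ≤ C. -/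
/-!
At a lasso minimizer the residual `r = y - ∑ wᵢ aᵢ` satisfies `|⟪aᵢ, r⟫| ≤ λ` for every `i`:
moving the `i`-th coefficient by `t` changes the objective by at most
`-t ⟪aᵢ, r⟫ + ‖aᵢ‖² t² / 2 + λ |t|`, which cannot be negative. So `θ = r / λ` satisfies
`|⟪aᵢ, θ⟫| ≤ 1`. As `y` lies in the span of the `aᵢ`, so does `θ`, and on that finite-dimensional
span the map `θ ↦ (⟪aᵢ, θ⟫)ᵢ` is injective, hence antilipschitz; this bounds `‖θ‖` independently
of `λ`.
-/

open RealInnerProductSpace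

open Filter Topology in
theorem le_of_forall_pos_le_mul_add {b c lam : ℝ} (h : ∀ t > 0, c ≤ b * t + lam) : c ≤ lam := by
  have hcont : Continuous fun t : ℝ => b * t + lam := by fun_prop
  have hlim : Tendsto (fun t => b * t + lam) (𝓝[>] 0) (𝓝 lam) := by
    simpa using (hcont.tendsto 0).mono_left nhdsWithin_le_nhds
  exact ge_of_tendsto hlim (eventually_nhdsWithin_of_forall h)

theorem abs_le_of_forall_mul_le_sq_add_abs {b c lam : ℝ}
    (h : ∀ t, t * c ≤ b * t ^ 2 + lam * |t|) : |c| ≤ lam := by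
  rw [abs_le]
  constructor
  · refine neg_le.mp (le_of_forall_pos_le_mul_add (b := b) fun t ht => ?_)
    have := h (-t)
    rw [abs_neg, abs_of_pos ht] at this
    nlinarith
  · refine le_of_forall_pos_le_mul_add (b := b) fun t ht => ?_
    have := h t
    rw [abs_of_pos ht] at this
    nlinarith

section Lasso

variable {ι E : Type*} [Fintype ι] [NormedAddCommGroup E] [InnerProductSpace ℝ E]

noncomputable def lassoObjective (a : ι → E) (y : E) (lam : ℝ) (w : ι → ℝ) : ℝ :=
  (1 / 2) * ‖y - ∑ i, w i • a i‖ ^ 2 + lam * ∑ i, |w i|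

theorem lassoObjective_add_single_le [DecidableEq ι] (a : ι → E) (y : E) {lam : ℝ} (hlam : 0 ≤ lam)
    (w : ι → ℝ) (i : ι) (t : ℝ) :
    lassoObjective a y lam (w + Pi.single i t) ≤
      lassoObjective a y lam w - t * ⟪a i, y - ∑ j, w j • a j⟫ + ‖a i‖ ^ 2 / 2 * t ^ 2 +
        lam * |t| := by
  have hsum : ∑ j, (w + Pi.single i t : ι → ℝ) j • a j = ∑ j, w j • a j + t • a i := by
    simp [add_smul, Finset.sum_add_distrib, Pi.single_apply]
  have habs : ∑ j, |(w + Pi.single i t : ι → ℝ) j| ≤ ∑ j, |w j| + |t| := by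
    calc ∑ j, |(w + Pi.single i t : ι → ℝ) j| ≤ ∑ j, (|w j| + (Pi.single i |t| : ι → ℝ) j) := by
          refine Finset.sum_le_sum fun j _ => ?_
          rw [Pi.add_apply, ← Pi.apply_single (fun _ => abs) (fun _ => abs_zero)]
          exact abs_add_le _ _
      _ = ∑ j, |w j| + |t| := by simp [Finset.sum_add_distrib]
  have hnorm : ‖y - (∑ j, w j • a j + t • a i)‖ ^ 2 =
      ‖y - ∑ j, w j • a j‖ ^ 2 - 2 * (t * ⟪a i, y - ∑ j, w j • a j⟫) + t ^ 2 * ‖a i‖ ^ 2 := by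
    rw [← sub_sub, norm_sub_sq_real, real_inner_smul_right, norm_smul, mul_pow, Real.norm_eq_abs,
      sq_abs, real_inner_comm]
  unfold lassoObjective
  rw [hsum, hnorm]
  nlinarith [mul_le_mul_of_nonneg_left habs hlam]

theorem abs_inner_lasso_residual_le [DecidableEq ι] {a : ι → E} {y : E} {lam : ℝ} (hlam : 0 ≤ lam)
    {ws : ι → ℝ} (hopt : ∀ w, lassoObjective a y lam ws ≤ lassoObjective a y lam w) (i : ι) :
    |⟪a i, y - ∑ j, ws j • a j⟫| ≤ lam :=
  abs_le_of_forall_mul_le_sq_add_abs (b := ‖a i‖ ^ 2 / 2) fun t => by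
    linarith [hopt (ws + Pi.single i t), lassoObjective_add_single_le a y hlam ws i t]

theorem exists_norm_le_mul_norm_inner (a : ι → E) :
    ∃ C : ℝ, 0 < C ∧ ∀ θ ∈ Submodule.span ℝ (Set.range a), ‖θ‖ ≤ C * ‖fun i => ⟪a i, θ⟫‖ := by
  set S := Submodule.span ℝ (Set.range a)
  have : FiniteDimensional ℝ S := FiniteDimensional.span_of_finite ℝ (Set.finite_range a)
  let T : S →ₗ[ℝ] ι → ℝ := LinearMap.pi (fun i => innerₛₗ ℝ (a i)) ∘ₗ S.subtype
  have hker : LinearMap.ker T = ⊥ := by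
    refine LinearMap.ker_eq_bot'.mpr fun θ hθ => Subtype.ext ?_
    have hperp : (θ : E) ∈ Sᗮ := by
      have hS : S ≤ LinearMap.ker (innerₛₗ ℝ (θ : E)) :=
        Submodule.span_le.mpr <| Set.range_subset_iff.mpr fun i => by
          simpa [T, real_inner_comm] using congrFun hθ i
      exact (Submodule.mem_orthogonal _ _).mpr fun u hu => by
        simpa [real_inner_comm] using hS hu
    have hbot : (θ : E) ∈ S ⊓ Sᗮ := ⟨θ.2, hperp⟩
    rwa [Submodule.inf_orthogonal_eq_bot, Submodule.mem_bot] at hbot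
  obtain ⟨K, hK, hanti⟩ := T.exists_antilipschitzWith hker
  exact ⟨K, hK, fun θ hθ => hanti.le_mul_norm (map_zero T) ⟨θ, hθ⟩⟩

end Lasso

theorem stmt_16 (d p : ℕ) (a : Fin p → EuclideanSpace ℝ (Fin d))
    (y : EuclideanSpace ℝ (Fin d))
    (hrange : ∃ w0 : Fin p → ℝ, y = ∑ i, w0 i • a i) :
    ∃ C : ℝ, 0 < C ∧ ∀ lam : ℝ, 0 < lam → ∀ ws : Fin p → ℝ,
      (∀ w : Fin p → ℝ,
        (1 / 2) * ‖y - ∑ i, ws i • a i‖ ^ 2 + lam * ∑ i, |ws i| ≤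
        (1 / 2) * ‖y - ∑ i, w i • a i‖ ^ 2 + lam * ∑ i, |w i|) →
      ‖lam⁻¹ • (y - ∑ i, ws i • a i)‖ ≤ C := by
  obtain ⟨w0, rfl⟩ := hrange
  obtain ⟨C, hC, hbound⟩ := exists_norm_le_mul_norm_inner a
  refine ⟨C, hC, fun lam hlam ws hopt => ?_⟩
  have hspan (w : Fin p → ℝ) : ∑ i, w i • a i ∈ Submodule.span ℝ (Set.range a) :=
    (Submodule.mem_span_range_iff_exists_fun ℝ).mpr ⟨w, rfl⟩
  set θ := lam⁻¹ • (∑ i, w0 i • a i - ∑ i, ws i • a i)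
  have hθ : θ ∈ Submodule.span ℝ (Set.range a) :=
    Submodule.smul_mem _ _ (Submodule.sub_mem _ (hspan w0) (hspan ws))
  have hfeasible : ‖fun i => ⟪a i, θ⟫‖ ≤ 1 := by
    refine (pi_norm_le_iff_of_nonneg zero_le_one).mpr fun i => ?_
    rw [real_inner_smul_right, Real.norm_eq_abs, abs_mul, abs_inv, abs_of_pos hlam]
    exact inv_mul_le_one_of_le₀ (abs_inner_lasso_residual_le hlam.le hopt i) hlam.le
  calc ‖θ‖ ≤ C * ‖fun i => ⟪a i, θ⟫‖ := hbound θ hθ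
    _ ≤ C := mul_le_of_le_one_right hC.le hfeasible
end
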